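/- Let d ≥ 1, Ω ⊆ ℝ^d open, ρ : Ω → (0,∞) smooth, h : (0,∞) → ℝ smooth, and φ : (0,∞) → ℝ smooth with ρ φ'(ρ) = h'(ρ) for all ρ > 0. Then on Ω: div( ρ ∇(φ(ρ)) ⊗ ∇(φ(ρ)) ) = Δ( h(ρ) ∇(φ(ρ)) ) − div( h(ρ) ∇²(φ(ρ)) ). -/

import Mathlib

open MeasureTheory Real

noncomputable section

/-- Partial derivative of a scalar field in the coordinate direction `i`. -/
def pd {d : ℕ} (i : Fin d) (f : (Fin d → ℝ) → ℝ) (x : Fin d → ℝ) : ℝ :=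
  fderiv ℝ f x (Pi.single i 1)

/-- Gradient of a scalar field. -/
def grad {d : ℕ} (f : (Fin d → ℝ) → ℝ) (x : Fin d → ℝ) : Fin d → ℝ :=
  fun i => pd i f x

/-- Divergence of a vector field. -/
def dvg {d : ℕ} (u : (Fin d → ℝ) → (Fin d → ℝ)) (x : Fin d → ℝ) : ℝ :=
  ∑ i, pd i (fun y => u y i) x

/-- Row-wise divergence of a matrix field: `(dvgM M x) i = ∑ j, ∂_j M_{ij}`. -/
def dvgM {d : ℕ} (M : (Fin d → ℝ) → Fin d → Fin d → ℝ) (x : Fin d → ℝ) : Fin d → ℝ :=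
  fun i => ∑ j, pd j (fun y => M y i j) x

/-- Hessian of a scalar field. -/
def hess {d : ℕ} (f : (Fin d → ℝ) → ℝ) (x : Fin d → ℝ) : Fin d → Fin d → ℝ :=
  fun i j => pd i (fun y => pd j f y) x

/-- Laplacian of a scalar field. -/
def lap {d : ℕ} (f : (Fin d → ℝ) → ℝ) (x : Fin d → ℝ) : ℝ :=
  ∑ i, pd i (fun y => pd i f y) x

/-- Jacobian matrix of a vector field: `(jac u x) i j = ∂_j u_i`. -/
def jac {d : ℕ} (u : (Fin d → ℝ) → (Fin d → ℝ)) (x : Fin d → ℝ) : Fin d → Fin d → ℝ :=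
  fun i j => pd j (fun y => u y i) x

/-- Symmetric part of the gradient of a vector field, `Du = (∇u + (∇u)ᵀ)/2`. -/
def symD {d : ℕ} (u : (Fin d → ℝ) → (Fin d → ℝ)) (x : Fin d → ℝ) : Fin d → Fin d → ℝ :=
  fun i j => (jac u x i j + jac u x j i) / 2

/-- Antisymmetric part of the gradient of a vector field, `Au = (∇u − (∇u)ᵀ)/2`. -/
def antiD {d : ℕ} (u : (Fin d → ℝ) → (Fin d → ℝ)) (x : Fin d → ℝ) : Fin d → Fin d → ℝ :=
  fun i j => (jac u x i j - jac u x j i) / 2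

/-- Tensor product of two vectors: `(a ⊗ b)_{ij} = a_i b_j`. -/
def tens {d : ℕ} (a b : Fin d → ℝ) : Fin d → Fin d → ℝ := fun i j => a i * b j

/-- ℤ^d-periodicity: a function of this kind descends to the torus `T^d = ℝ^d/ℤ^d`. -/
def SpacePeriodic {d : ℕ} {E : Type*} (f : (Fin d → ℝ) → E) : Prop :=
  ∀ x : Fin d → ℝ, ∀ n : Fin d → ℤ, f (x + fun i => (n i : ℝ)) = f x

/-- Fundamental domain of the torus `T^d = ℝ^d/ℤ^d` (with its probability Lebesgue measure). -/
def unitBox (d : ℕ) : Set (Fin d → ℝ) := Set.Icc 0 1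


section pdHelpers
variable {d : ℕ}

lemma pd_congr {f g : (Fin d → ℝ) → ℝ} {x} (j : Fin d) (hfg : f =ᶠ[nhds x] g) :
    pd j f x = pd j g x := by unfold pd; rw [hfg.fderiv_eq]

lemma pd_sub {f g : (Fin d → ℝ) → ℝ} {x} (j : Fin d)
    (hf : DifferentiableAt ℝ f x) (hg : DifferentiableAt ℝ g x) :
    pd j (fun y => f y - g y) x = pd j f x - pd j g x := by
  unfold pd; rw [fderiv_fun_sub hf hg]; rfl

lemma pd_mul {f g : (Fin d → ℝ) → ℝ} {x} (j : Fin d)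
    (hf : DifferentiableAt ℝ f x) (hg : DifferentiableAt ℝ g x) :
    pd j (fun y => f y * g y) x = pd j f x * g x + f x * pd j g x := by
  unfold pd; rw [fderiv_fun_mul hf hg]; simp; ring

lemma pd_comp {F : ℝ → ℝ} {f : (Fin d → ℝ) → ℝ} {x} (j : Fin d)
    (hF : DifferentiableAt ℝ F (f x)) (hf : DifferentiableAt ℝ f x) :
    pd j (fun y => F (f y)) x = deriv F (f x) * pd j f x := by
  unfold pd
  have : (fun y => F (f y)) = F ∘ f := rfl
  rw [this, fderiv_comp x hF hf]
  have h2 : ∀ t : ℝ, fderiv ℝ F (f x) t = t * deriv F (f x) := by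
    intro t
    rw [← fderiv_apply_one_eq_deriv, ← smul_eq_mul, ← (fderiv ℝ F (f x)).map_smul, smul_eq_mul, mul_one]
  simp [ContinuousLinearMap.comp_apply, h2, mul_comm]

lemma contDiffAt_pd {f : (Fin d → ℝ) → ℝ} {x} (j : Fin d) (hf : ContDiffAt ℝ (⊤ : ℕ∞) f x) :
    ContDiffAt ℝ (⊤ : ℕ∞) (pd j f) x := by
  have h1 : ContDiffAt ℝ (⊤ : ℕ∞) (fderiv ℝ f) x := hf.fderiv_right (by simp)
  exact h1.clm_apply contDiffAt_const

lemma pd_comm {f : (Fin d → ℝ) → ℝ} {x} (i j : Fin d) (hf : ContDiffAt ℝ (⊤ : ℕ∞) f x) :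
    pd i (fun y => pd j f y) x = pd j (fun y => pd i f y) x := by
  have hsym := hf.isSymmSndFDerivAt (by rw [minSmoothness_of_isRCLikeNormedField]; exact WithTop.coe_le_coe.mpr le_top)
  have hd : DifferentiableAt ℝ (fderiv ℝ f) x :=
    (hf.fderiv_right ((by simp) : ((⊤ : ℕ∞) : WithTop ℕ∞) + 1 ≤ ((⊤ : ℕ∞) : WithTop ℕ∞))).differentiableAt (by simp)
  have e : ∀ (a b : Fin d → ℝ),
      fderiv ℝ (fun y => fderiv ℝ f y a) x b = fderiv ℝ (fderiv ℝ f) x b a := by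
    intro a b
    rw [fderiv_clm_apply hd (differentiableAt_const a)]
    simp
  unfold pd
  rw [e, e, hsym]

end pdHelpers

theorem statement6 (d : ℕ) (hd : 1 ≤ d) (Ω : Set (Fin d → ℝ)) (hΩ : IsOpen Ω)
    (ρ : (Fin d → ℝ) → ℝ) (hρpos : ∀ x ∈ Ω, 0 < ρ x) (hρ : ContDiffOn ℝ (⊤ : ℕ∞) ρ Ω)
    (h φ : ℝ → ℝ) (hh : ContDiffOn ℝ (⊤ : ℕ∞) h (Set.Ioi 0)) (hφ : ContDiffOn ℝ (⊤ : ℕ∞) φ (Set.Ioi 0))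
    (hφ' : ∀ r : ℝ, 0 < r → r * deriv φ r = deriv h r) :
    ∀ x ∈ Ω, ∀ i : Fin d,
      dvgM (fun y i' j => ρ y * grad (fun z => φ (ρ z)) y i' * grad (fun z => φ (ρ z)) y j) x i
        = lap (fun y => h (ρ y) * grad (fun z => φ (ρ z)) y i) x
          - dvgM (fun y i' j => h (ρ y) * hess (fun z => φ (ρ z)) y i' j) x i := by
  intro x hx i
  set u : (Fin d → ℝ) → ℝ := fun z => φ (ρ z) with hu_def
  have hρat : ∀ y ∈ Ω, ContDiffAt ℝ (⊤ : ℕ∞) ρ y := fun y hy => hρ.contDiffAt (hΩ.mem_nhds hy)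
  have huat : ∀ y ∈ Ω, ContDiffAt ℝ (⊤ : ℕ∞) u y := fun y hy =>
    ((hφ.contDiffAt (isOpen_Ioi.mem_nhds (hρpos y hy))).comp y (hρat y hy))
  have hHat : ∀ y ∈ Ω, ContDiffAt ℝ (⊤ : ℕ∞) (fun z => h (ρ z)) y := fun y hy =>
    ((hh.contDiffAt (isOpen_Ioi.mem_nhds (hρpos y hy))).comp y (hρat y hy))
  have key : ∀ j : Fin d, ∀ y ∈ Ω,
      ρ y * pd i u y * pd j u y
        = pd j (fun z => h (ρ z) * pd i u z) y - h (ρ y) * pd i (fun z => pd j u z) y := by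
    intro j y hy
    have hρd : DifferentiableAt ℝ ρ y := (hρat y hy).differentiableAt (by simp)
    have hφy : DifferentiableAt ℝ φ (ρ y) :=
      ((hφ.contDiffAt (isOpen_Ioi.mem_nhds (hρpos y hy))).differentiableAt (by simp))
    have hhy : DifferentiableAt ℝ h (ρ y) :=
      ((hh.contDiffAt (isOpen_Ioi.mem_nhds (hρpos y hy))).differentiableAt (by simp))
    have hpdiu : DifferentiableAt ℝ (fun z => pd i u z) y :=
      (contDiffAt_pd i (huat y hy)).differentiableAt (by simp)
    rw [pd_mul j ((hHat y hy).differentiableAt (by simp)) hpdiu]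
    rw [pd_comp j hhy hρd]
    rw [pd_comm j i (huat y hy)]
    have hpdj : pd j u y = deriv φ (ρ y) * pd j ρ y := pd_comp j hφy hρd
    rw [← hφ' (ρ y) (hρpos y hy), hpdj]
    ring
  have main : ∀ j : Fin d,
      pd j (fun y => ρ y * pd i u y * pd j u y) x
        = pd j (fun y => pd j (fun z => h (ρ z) * pd i u z) y) x
          - pd j (fun y => h (ρ y) * pd i (fun z => pd j u z) y) x := by
    intro j
    have hev : (fun y => ρ y * pd i u y * pd j u y)
        =ᶠ[nhds x] (fun y => pd j (fun z => h (ρ z) * pd i u z) y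
            - h (ρ y) * pd i (fun z => pd j u z) y) := by
      filter_upwards [hΩ.mem_nhds hx] with y hy using key j y hy
    rw [pd_congr j hev]
    exact pd_sub j
      ((contDiffAt_pd j ((hHat x hx).mul (contDiffAt_pd i (huat x hx)))).differentiableAt (by simp))
      (((hHat x hx).mul (contDiffAt_pd i (contDiffAt_pd j (huat x hx)))).differentiableAt (by simp))
  simp only [dvgM, lap, grad, hess]
  rw [← Finset.sum_sub_distrib]
  exact Finset.sum_congr rfl fun j _ => main j


end
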